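/- Smoothed approximation L¹ error: let Z be a real random variable whose distribution admits a density π on (−δ_0, δ_0) with π(x) ≤ C for x ∈ (−δ_0, δ_0), and let S_k(x) = 1/(1+e^{−kx}). Then E[|S_k(Z) − 𝟙{Z > 0}|] ≤ 2/(1 + e^{kδ_0}) + (2C/k)·ln(2/(1+e^{−kδ_0})). In particular E[|S_k(Z) − 𝟙{Z > 0}|] = O(1/k) as k → ∞. -/

import Mathlib

/-!
Writing `S_k(x) = σ(k x)` with the logistic function `σ`, the error is
`|S_k(x) - 𝟙{x > 0}| = σ(-k|x|)`, an even function decreasing in `|x|`. Off the window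
`(-δ₀, δ₀)` it is at most `σ(-k δ₀) = 1/(1 + e^{k δ₀})`, and the window carries mass at most one.
On the window the law of `Z` is dominated by `C` times Lebesgue measure, and
`∫_{-δ₀}^{δ₀} σ(-k|x|) dx = (2/k) log (2/(1 + e^{-k δ₀}))`, since `-log (1 + e^{-kx}) / k` is an
antiderivative of `σ(-kx)`.
-/

open MeasureTheory

noncomputable def sigmoid (x k : ℝ) : ℝ := 1 / (1 + Real.exp (-(k * x)))

open Set

lemma sigmoid_eq_real_sigmoid (x k : ℝ) : sigmoid x k = Real.sigmoid (k * x) := by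
  rw [sigmoid, Real.sigmoid_def, one_div]

lemma abs_sigmoid_sub_indicator (x k : ℝ) :
    |sigmoid x k - (if x > 0 then (1:ℝ) else 0)| = Real.sigmoid (-(k * |x|)) := by
  rw [sigmoid_eq_real_sigmoid]
  split_ifs with hx
  · rw [abs_of_pos hx, Real.sigmoid_neg, abs_sub_comm,
      abs_of_nonneg (sub_nonneg.mpr (Real.sigmoid_le_one _))]
  · rw [sub_zero, abs_of_nonpos (not_lt.mp hx), mul_neg, neg_neg,
      abs_of_nonneg (Real.sigmoid_nonneg _)]

lemma hasDerivAt_neg_log_one_add_exp_neg_div {k : ℝ} (hk : k ≠ 0) (x : ℝ) :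
    HasDerivAt (fun x ↦ -Real.log (1 + Real.exp (-(k * x))) / k)
      (Real.sigmoid (-(k * x))) x := by
  have hexp : HasDerivAt (fun x ↦ 1 + Real.exp (-(k * x))) (Real.exp (-(k * x)) * -k) x := by
    simpa using (((hasDerivAt_id x).const_mul k).neg.exp).const_add 1
  refine ((hexp.log (by positivity)).neg.div_const k).congr_deriv ?_
  rw [← Real.sigmoid_mul_rexp_neg, Real.sigmoid_def]
  field_simp

lemma integral_sigmoid_neg_mul {k : ℝ} (hk : k ≠ 0) (a b : ℝ) :
    ∫ x in a..b, Real.sigmoid (-(k * x))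
      = (Real.log (1 + Real.exp (-(k * a))) - Real.log (1 + Real.exp (-(k * b)))) / k := by
  rw [intervalIntegral.integral_eq_sub_of_hasDerivAt
    (fun x _ ↦ hasDerivAt_neg_log_one_add_exp_neg_div hk x)
    ((by fun_prop : Continuous fun x ↦ Real.sigmoid (-(k * x))).intervalIntegrable _ _)]
  ring

lemma intervalIntegral_comp_abs {E : Type*} [NormedAddCommGroup E] [NormedSpace ℝ E]
    {f : ℝ → E} (hf : Continuous f) {a : ℝ} (ha : 0 ≤ a) :
    ∫ x in -a..a, f |x| = (2 : ℝ) • ∫ x in (0 : ℝ)..a, f x := by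
  have hfa : Continuous (fun x ↦ f |x|) := hf.comp continuous_abs
  have hleft : ∫ x in -a..0, f |x| = ∫ x in (0 : ℝ)..a, f |x| := by
    simpa using (intervalIntegral.integral_comp_neg (a := 0) (b := a) (fun x ↦ f |x|)).symm
  have hright : ∫ x in (0 : ℝ)..a, f |x| = ∫ x in (0 : ℝ)..a, f x :=
    intervalIntegral.integral_congr fun x hx ↦ by
      rw [uIcc_of_le ha] at hx
      simp only [abs_of_nonneg hx.1]
  rw [← intervalIntegral.integral_add_adjacent_intervals (hfa.intervalIntegrable _ _)
    (hfa.intervalIntegrable _ _), hleft, hright, two_smul]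

lemma setIntegral_Ioo_sigmoid_neg_mul_abs {k δ : ℝ} (hk : k ≠ 0) (hδ : 0 ≤ δ) :
    ∫ x in Ioo (-δ) δ, Real.sigmoid (-(k * |x|))
      = 2 / k * Real.log (2 / (1 + Real.exp (-(k * δ)))) := by
  rw [← integral_Ioc_eq_integral_Ioo, ← intervalIntegral.integral_of_le (by linarith),
    intervalIntegral_comp_abs (f := fun x ↦ Real.sigmoid (-(k * x))) (by fun_prop) hδ,
    integral_sigmoid_neg_mul hk, Real.log_div two_ne_zero (by positivity)]
  norm_num
  ring

lemma setIntegral_compl_Ioo_sigmoid_neg_mul_abs_le {ν : Measure ℝ} [IsZeroOrProbabilityMeasure ν]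
    {k : ℝ} (hk : 0 ≤ k) (δ : ℝ) :
    ∫ x in (Ioo (-δ) δ)ᶜ, Real.sigmoid (-(k * |x|)) ∂ν ≤ Real.sigmoid (-(k * δ)) := by
  have hle : ∀ x ∈ (Ioo (-δ) δ)ᶜ, ‖Real.sigmoid (-(k * |x|))‖ ≤ Real.sigmoid (-(k * δ)) :=
    fun x hx ↦ by
      rw [Real.norm_of_nonneg (Real.sigmoid_nonneg _)]
      exact Real.sigmoid_le (neg_le_neg (mul_le_mul_of_nonneg_left
        (not_lt.mp fun h ↦ hx (abs_lt.mp h)) hk))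
  calc ∫ x in (Ioo (-δ) δ)ᶜ, Real.sigmoid (-(k * |x|)) ∂ν
      ≤ Real.sigmoid (-(k * δ)) * ν.real (Ioo (-δ) δ)ᶜ :=
        (Real.le_norm_self _).trans
          (norm_setIntegral_le_of_norm_le_const (measure_lt_top _ _) hle)
    _ ≤ Real.sigmoid (-(k * δ)) :=
        mul_le_of_le_one_right (Real.sigmoid_nonneg _) measureReal_le_one

section DensityBound

variable {α : Type*} [MeasurableSpace α]

lemma restrict_le_smul_of_density_le {ν ρ : Measure α} {p : α → ℝ} {A : Set α} {C : ℝ}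
    (hA : MeasurableSet A)
    (hdens : ∀ s, MeasurableSet s → s ⊆ A → ν s = ∫⁻ x in s, ENNReal.ofReal (p x) ∂ρ)
    (hp : ∀ x ∈ A, p x ≤ C) :
    ν.restrict A ≤ ENNReal.ofReal C • ρ.restrict A := by
  refine Measure.le_iff.2 fun s hs ↦ ?_
  rw [Measure.restrict_apply hs, Measure.smul_apply, Measure.restrict_apply hs, smul_eq_mul,
    hdens _ (hs.inter hA) inter_subset_right, ← setLIntegral_const]
  exact setLIntegral_mono measurable_const fun x hx ↦ ENNReal.ofReal_le_ofReal (hp x hx.2)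

lemma integral_le_mul_integral_of_le_smul {ν μ : Measure α} {c : ℝ} (hc : 0 ≤ c)
    (hle : ν ≤ ENNReal.ofReal c • μ) {f : α → ℝ} (hf0 : 0 ≤ᵐ[μ] f) (hf : Integrable f μ) :
    ∫ x, f x ∂ν ≤ c * ∫ x, f x ∂μ :=
  calc ∫ x, f x ∂ν ≤ ∫ x, f x ∂(ENNReal.ofReal c • μ) :=
        integral_mono_measure hle (Measure.ae_smul_measure hf0 _)
          (hf.smul_measure ENNReal.ofReal_ne_top)
    _ = c * ∫ x, f x ∂μ := by rw [integral_smul_measure, ENNReal.toReal_ofReal hc, smul_eq_mul]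

end DensityBound

theorem smoothed_L1_error_general
    {Ω : Type*} [MeasurableSpace Ω] (μ : Measure Ω) [IsProbabilityMeasure μ]
    (Z : Ω → ℝ) (π : ℝ → ℝ) (C δ₀ k : ℝ)
    (hZ : Measurable Z) (hδ₀ : 0 < δ₀) (hk : 0 < k) (hC : 0 ≤ C)
    (hdens : ∀ s : Set ℝ, MeasurableSet s → s ⊆ Set.Ioo (-δ₀) δ₀ →
      Measure.map Z μ s = ∫⁻ x in s, ENNReal.ofReal (π x))
    (hπbd : ∀ x ∈ Set.Ioo (-δ₀) δ₀, π x ≤ C) :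
    ∫ ω, |sigmoid (Z ω) k - (if Z ω > 0 then (1:ℝ) else 0)| ∂μ
      ≤ 2 / (1 + Real.exp (k * δ₀))
        + (2 * C / k) * Real.log (2 / (1 + Real.exp (-(k * δ₀)))) := by
  set g : ℝ → ℝ := fun x ↦ Real.sigmoid (-(k * |x|))
  have hg : Continuous g := by fun_prop
  have : IsProbabilityMeasure (μ.map Z) := Measure.isProbabilityMeasure_map hZ.aemeasurable
  have hpush : ∫ ω, |sigmoid (Z ω) k - (if Z ω > 0 then (1:ℝ) else 0)| ∂μ
      = ∫ x, g x ∂(μ.map Z) := by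
    rw [integral_map hZ.aemeasurable hg.aestronglyMeasurable]
    simp only [g, abs_sigmoid_sub_indicator]
  have hbulk : ∫ x in Ioo (-δ₀) δ₀, g x ∂(μ.map Z)
      ≤ 2 * C / k * Real.log (2 / (1 + Real.exp (-(k * δ₀)))) :=
    calc ∫ x in Ioo (-δ₀) δ₀, g x ∂(μ.map Z) ≤ C * ∫ x in Ioo (-δ₀) δ₀, g x :=
          integral_le_mul_integral_of_le_smul hC
            (restrict_le_smul_of_density_le measurableSet_Ioo hdens hπbd)
            (.of_forall fun _ ↦ Real.sigmoid_nonneg _)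
            (hg.integrableOn_Icc.mono_set Ioo_subset_Icc_self)
      _ = _ := by rw [setIntegral_Ioo_sigmoid_neg_mul_abs hk.ne' hδ₀.le]; ring
  have htail := setIntegral_compl_Ioo_sigmoid_neg_mul_abs_le (ν := μ.map Z) hk.le δ₀
  rw [Real.sigmoid_def, neg_neg, ← one_div] at htail
  have hgi : Integrable g (μ.map Z) := .of_bound hg.aestronglyMeasurable 1 (.of_forall fun x ↦ by
    rw [Real.norm_of_nonneg (Real.sigmoid_nonneg _)]; exact Real.sigmoid_le_one _)
  rw [hpush, ← integral_add_compl measurableSet_Ioo hgi]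
  have hhalf : 1 / (1 + Real.exp (k * δ₀)) ≤ 2 / (1 + Real.exp (k * δ₀)) := by gcongr; norm_num
  exact (add_le_add hbulk (htail.trans hhalf)).trans_eq (add_comm _ _)

theorem smoothed_L1_error
    {Ω : Type*} [MeasurableSpace Ω] (μ : Measure Ω) [IsProbabilityMeasure μ]
    (Z : Ω → ℝ) (π : ℝ → ℝ) (C δ₀ k : ℝ)
    (hZ : Measurable Z) (hδ₀ : 0 < δ₀) (hk : 0 < k) (hC : 0 ≤ C)
    (hπnn : ∀ x, 0 ≤ π x)
    (hdens : ∀ s : Set ℝ, MeasurableSet s → s ⊆ Set.Ioo (-δ₀) δ₀ →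
      Measure.map Z μ s = ∫⁻ x in s, ENNReal.ofReal (π x))
    (hπbd : ∀ x ∈ Set.Ioo (-δ₀) δ₀, π x ≤ C) :
    ∫ ω, |sigmoid (Z ω) k - (if Z ω > 0 then (1:ℝ) else 0)| ∂μ
      ≤ 2 / (1 + Real.exp (k * δ₀))
        + (2 * C / k) * Real.log (2 / (1 + Real.exp (-(k * δ₀)))) :=
  smoothed_L1_error_general μ Z π C δ₀ k hZ hδ₀ hk hC hdens hπbd
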